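/- arXiv:1502.04720 — 2 statements merged into one kernel-verified Lean document; each statement's English description precedes it below -/
import Mathlib

section
/- Let A and B be n×n Hermitian complex matrices, and let λ_1(A) ≤ … ≤ λ_n(A) and λ_1(B) ≤ … ≤ λ_n(B) be their eigenvalues counted with multiplicity in increasing order. Then |λ_k(A) − λ_k(B)| ≤ ‖A − B‖ for every k, where ‖·‖ is the operator norm. In particular, the ordered eigenvalues of a Hermitian matrix are 1-Lipschitz continuous functions of the matrix in operator norm. -/
/-!
Weyl's inequality by a dimension count. Sort the eigenvalues of self-adjoint `T` and `S`
decreasingly and fix an index `k`. Asking a vector to have no component along the eigenvectors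
of `T` after index `k` nor along those of `S` before index `k` imposes `n - 1` linear conditions,
so some `x ≠ 0` meets them. On such an `x` the quadratic form of `T` is at least
`λₖ(T) ‖x‖²` and that of `S` at most `λₖ(S) ‖x‖²`, so `λₖ(T) - λₖ(S) ≤ ‖T - S‖`.
The increasing tuples of the theorem are these eigenvalues read backwards, as both factor the
characteristic polynomial.
-/

open Polynomial

open scoped InnerProductSpace

theorem OrthonormalBasis.exists_ne_zero_repr_eq_zero {𝕜 E : Type*} [RCLike 𝕜]
    [NormedAddCommGroup E] [InnerProductSpace 𝕜 E] {n : ℕ} (b b' : OrthonormalBasis (Fin n) 𝕜 E)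
    (k : Fin n) : ∃ x ≠ 0, (∀ i, k < i → b.repr x i = 0) ∧ ∀ i, i < k → b'.repr x i = 0 := by
  let f : E →ₗ[𝕜] {i // i ≠ k} → 𝕜 :=
    LinearMap.pi fun i => innerₛₗ 𝕜 (if k < i.1 then b i else b' i)
  have := b.toBasis.finiteDimensional_of_finite
  have hf : LinearMap.ker f ≠ ⊥ := LinearMap.ker_ne_bot_of_finrank_lt <| by
    simpa [Module.finrank_eq_card_basis b.toBasis] using k.pos
  obtain ⟨x, hx, hx0⟩ := Submodule.exists_mem_ne_zero_of_ne_bot hf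
  have hxi (i : Fin n) (hi : i ≠ k) : ⟪if k < i then b i else b' i, x⟫_𝕜 = 0 :=
    congr_fun (LinearMap.mem_ker.mp hx) ⟨i, hi⟩
  refine ⟨x, hx0, fun i hi => ?_, fun i hi => ?_⟩
  · simpa [b.repr_apply_apply, hi] using hxi i hi.ne'
  · simpa [b'.repr_apply_apply, hi.not_gt] using hxi i hi.ne

namespace LinearMap.IsSymmetric

variable {𝕜 E : Type*} [RCLike 𝕜] [NormedAddCommGroup E] [InnerProductSpace 𝕜 E]
  [FiniteDimensional 𝕜 E] {T S : E →ₗ[𝕜] E} {n : ℕ}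

theorem re_inner_apply_self_eq_sum (hT : T.IsSymmetric) (hn : Module.finrank 𝕜 E = n) (x : E) :
    RCLike.re ⟪x, T x⟫_𝕜 =
      ∑ i, hT.eigenvalues hn i * ‖(hT.eigenvectorBasis hn).repr x i‖ ^ 2 := by
  rw [← (hT.eigenvectorBasis hn).repr.inner_map_map, PiLp.inner_apply, map_sum]
  refine Finset.sum_congr rfl fun i _ => ?_
  rw [eigenvectorBasis_apply_self_apply, RCLike.inner_apply, mul_assoc, RCLike.mul_conj]
  norm_cast

theorem mul_norm_sq_le_re_inner_apply_self (hT : T.IsSymmetric) (hn : Module.finrank 𝕜 E = n)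
    {c : ℝ} {x : E} (h : ∀ i, (hT.eigenvectorBasis hn).repr x i ≠ 0 → c ≤ hT.eigenvalues hn i) :
    c * ‖x‖ ^ 2 ≤ RCLike.re ⟪x, T x⟫_𝕜 := by
  rw [re_inner_apply_self_eq_sum, ← (hT.eigenvectorBasis hn).repr.norm_map,
    EuclideanSpace.norm_sq_eq, Finset.mul_sum]
  refine Finset.sum_le_sum fun i _ => ?_
  by_cases hi : (hT.eigenvectorBasis hn).repr x i = 0
  · simp [hi]
  · exact mul_le_mul_of_nonneg_right (h i hi) (sq_nonneg _)

theorem re_inner_apply_self_le_mul_norm_sq (hT : T.IsSymmetric) (hn : Module.finrank 𝕜 E = n)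
    {c : ℝ} {x : E} (h : ∀ i, (hT.eigenvectorBasis hn).repr x i ≠ 0 → hT.eigenvalues hn i ≤ c) :
    RCLike.re ⟪x, T x⟫_𝕜 ≤ c * ‖x‖ ^ 2 := by
  rw [re_inner_apply_self_eq_sum, ← (hT.eigenvectorBasis hn).repr.norm_map,
    EuclideanSpace.norm_sq_eq, Finset.mul_sum]
  refine Finset.sum_le_sum fun i _ => ?_
  by_cases hi : (hT.eigenvectorBasis hn).repr x i = 0
  · simp [hi]
  · exact mul_le_mul_of_nonneg_right (h i hi) (sq_nonneg _)

theorem eigenvalues_sub_le (hT : T.IsSymmetric) (hS : S.IsSymmetric) (hn : Module.finrank 𝕜 E = n)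
    {c : ℝ} (h : ∀ x, RCLike.re ⟪x, T x⟫_𝕜 - RCLike.re ⟪x, S x⟫_𝕜 ≤ c * ‖x‖ ^ 2) (k : Fin n) :
    hT.eigenvalues hn k - hS.eigenvalues hn k ≤ c := by
  obtain ⟨x, hx0, hxT, hxS⟩ :=
    (hT.eigenvectorBasis hn).exists_ne_zero_repr_eq_zero (hS.eigenvectorBasis hn) k
  have hT_ge : hT.eigenvalues hn k * ‖x‖ ^ 2 ≤ RCLike.re ⟪x, T x⟫_𝕜 :=
    hT.mul_norm_sq_le_re_inner_apply_self hn fun i hi =>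
      hT.eigenvalues_antitone hn (not_lt.mp (mt (hxT i) hi))
  have hS_le : RCLike.re ⟪x, S x⟫_𝕜 ≤ hS.eigenvalues hn k * ‖x‖ ^ 2 :=
    hS.re_inner_apply_self_le_mul_norm_sq hn fun i hi =>
      hS.eigenvalues_antitone hn (not_lt.mp (mt (hxS i) hi))
  have hx : 0 < ‖x‖ ^ 2 := by positivity
  refine le_of_mul_le_mul_right ?_ hx
  linarith [h x]

theorem abs_eigenvalues_sub_le (hT : T.IsSymmetric) (hS : S.IsSymmetric)
    (hn : Module.finrank 𝕜 E = n) {c : ℝ}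
    (h : ∀ x, |RCLike.re ⟪x, T x⟫_𝕜 - RCLike.re ⟪x, S x⟫_𝕜| ≤ c * ‖x‖ ^ 2) (k : Fin n) :
    |hT.eigenvalues hn k - hS.eigenvalues hn k| ≤ c :=
  abs_sub_le_iff.mpr
    ⟨hT.eigenvalues_sub_le hS hn (fun x => (abs_le.mp (h x)).2) k,
      hS.eigenvalues_sub_le hT hn (fun x => by linarith [(abs_le.mp (h x)).1]) k⟩

theorem eigenvalues_eq_of_charpoly_eq (hT : T.IsSymmetric) (hn : Module.finrank 𝕜 E = n)
    {μ : Fin n → ℝ} (hμ : Antitone μ) (h : T.charpoly = ∏ i, (X - C (μ i : 𝕜))) :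
    hT.eigenvalues hn = μ := by
  have hroots := hT.roots_charpoly_eq_eigenvalues hn
  rw [h, Polynomial.roots_prod _ _ (by simp [Finset.prod_ne_zero_iff, X_sub_C_ne_zero])] at hroots
  have hre := congr_arg (Multiset.map RCLike.re) hroots
  simp only [roots_X_sub_C, Multiset.bind_singleton, Function.comp_def,
    RCLike.ofReal_re, Fin.univ_val_map, Multiset.map_coe, List.map_ofFn] at hre
  exact (List.ofFn_injective ((Multiset.coe_eq_coe.mp hre).eq_of_sortedGE
    hμ.sortedGE_ofFn (hT.eigenvalues_antitone hn).sortedGE_ofFn)).symm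

end LinearMap.IsSymmetric

theorem ContinuousLinearMap.abs_re_inner_apply_self_le {𝕜 E : Type*} [RCLike 𝕜]
    [NormedAddCommGroup E] [InnerProductSpace 𝕜 E] (L : E →L[𝕜] E) (x : E) :
    |RCLike.re ⟪x, L x⟫_𝕜| ≤ ‖L‖ * ‖x‖ ^ 2 := by
  grw [RCLike.abs_re_le_norm, norm_inner_le_norm, L.le_opNorm]
  exact le_of_eq (by ring)

theorem Matrix.charpoly_toEuclideanLin {𝕜 ι : Type*} [RCLike 𝕜] [Fintype ι] [DecidableEq ι]
    (A : Matrix ι ι 𝕜) : (Matrix.toEuclideanLin A).charpoly = A.charpoly :=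
  Matrix.charpoly_toLin A (PiLp.basisFun 2 𝕜 ι)

theorem Matrix.IsHermitian.eigenvalues_toEuclideanLin_eq {𝕜 : Type*} [RCLike 𝕜] {n : ℕ}
    {A : Matrix (Fin n) (Fin n) 𝕜} (hA : A.IsHermitian) {μ : Fin n → ℝ} (hμ : Monotone μ)
    (h : A.charpoly = ∏ i, (X - C (μ i : 𝕜))) :
    (Matrix.isSymmetric_toEuclideanLin_iff.mpr hA).eigenvalues finrank_euclideanSpace_fin =
      μ ∘ Fin.rev := by
  refine LinearMap.IsSymmetric.eigenvalues_eq_of_charpoly_eq _ _ (hμ.comp_antitone Fin.rev_anti) ?_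
  rw [Matrix.charpoly_toEuclideanLin, h]
  exact (Fintype.prod_equiv Fin.revPerm _ _ fun i => rfl).symm

/-- The ordered eigenvalues (with multiplicity) of Hermitian matrices are 1-Lipschitz
in the operator norm: `|λ_k(A) − λ_k(B)| ≤ ‖A − B‖` for every `k`.  The eigenvalues
counted with multiplicity are encoded as monotone tuples whose associated linear
factorization gives the characteristic polynomial. -/
theorem hermitian_eigenvalues_lipschitz (n : ℕ) (A B : Matrix (Fin n) (Fin n) ℂ)
    (hA : A.IsHermitian) (hB : B.IsHermitian)
    (μA μB : Fin n → ℝ) (hμA : Monotone μA) (hμB : Monotone μB)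
    (hAchar : A.charpoly = ∏ i : Fin n, (X - C ((μA i : ℂ))))
    (hBchar : B.charpoly = ∏ i : Fin n, (X - C ((μB i : ℂ)))) :
    ∀ k : Fin n, |μA k - μB k| ≤ ‖Matrix.toEuclideanCLM (𝕜 := ℂ) (A - B)‖ := by
  intro k
  have hquad (x : EuclideanSpace ℂ (Fin n)) :
      |RCLike.re ⟪x, Matrix.toEuclideanLin A x⟫_ℂ - RCLike.re ⟪x, Matrix.toEuclideanLin B x⟫_ℂ|
        ≤ ‖Matrix.toEuclideanCLM (𝕜 := ℂ) (A - B)‖ * ‖x‖ ^ 2 := by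
    rw [← map_sub, ← inner_sub_right, ← LinearMap.sub_apply, ← map_sub,
      ← Matrix.coe_toEuclideanCLM_eq_toEuclideanLin]
    exact (Matrix.toEuclideanCLM (𝕜 := ℂ) (A - B)).abs_re_inner_apply_self_le x
  have hTA := Matrix.isSymmetric_toEuclideanLin_iff.mpr hA
  have hTB := Matrix.isSymmetric_toEuclideanLin_iff.mpr hB
  calc |μA k - μB k|
      = |hTA.eigenvalues finrank_euclideanSpace_fin k.rev -
          hTB.eigenvalues finrank_euclideanSpace_fin k.rev| := by
        rw [hA.eigenvalues_toEuclideanLin_eq hμA hAchar,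
          hB.eigenvalues_toEuclideanLin_eq hμB hBchar]
        simp
    _ ≤ _ := hTA.abs_eigenvalues_sub_le hTB finrank_euclideanSpace_fin hquad k.rev
end

section
/- Let B, C > 0 and let (a_m), (n_m), (c_m) be nonnegative real sequences indexed by integers m ≥ N₀−1, satisfying: (i) a_{m+1} ≥ a_{m−1} + r_m for all m ≥ N₀+1, where r_m := −B n_{m−1} + c_{m+1} n_{m+1} + (c_m − C) n_m; (ii) c_m > max{B, C} for all m ≥ N₀; (iii) a_N ≥ c_N n_N for all N ≥ N₀; and (iv) a_m → 0 as m → ∞. Then n_N = 0 for every N ≥ N₀. -/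
/-- Abstract telescoping recursion from the finite-degree argument with a Higgs field:
with `r_m = −B n_{m−1} + c_{m+1} n_{m+1} + (c_m − C) n_m`, if `a_{m+1} ≥ a_{m−1} + r_m`
for `m ≥ N₀+1`, `c_m > max{B,C}` for `m ≥ N₀`, `a_N ≥ c_N n_N` for `N ≥ N₀`, and
`a_m → 0`, then `n_N = 0` for every `N ≥ N₀`. -/
theorem telescoping_recursion_higgs (N₀ : ℕ) (hN₀ : 1 ≤ N₀) (B C : ℝ)
    (hB : 0 < B) (hC : 0 < C) (a n c : ℕ → ℝ)
    (ha : ∀ m, N₀ - 1 ≤ m → 0 ≤ a m)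
    (hn : ∀ m, N₀ - 1 ≤ m → 0 ≤ n m)
    (hcpos : ∀ m, N₀ - 1 ≤ m → 0 ≤ c m)
    (hrec : ∀ m, N₀ + 1 ≤ m →
      a (m - 1) + (-B * n (m - 1) + c (m + 1) * n (m + 1) + (c m - C) * n m)
        ≤ a (m + 1))
    (hc : ∀ m, N₀ ≤ m → max B C < c m)
    (haN : ∀ N, N₀ ≤ N → c N * n N ≤ a N)
    (hlim : Filter.Tendsto a Filter.atTop (nhds 0)) :
    ∀ N, N₀ ≤ N → n N = 0 := by
  intro N hN
  by_contra hne
  have hnN : 0 < n N := lt_of_le_of_ne (hn N (by omega)) (Ne.symm hne)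
  have hcN := hc N hN
  have hBc : B < c N := lt_of_le_of_lt (le_max_left B C) hcN
  set ε := (c N - B) * n N with hε
  have hεpos : 0 < ε := mul_pos (by linarith) hnN
  have key : ∀ k, ε + B * n (N + 2 * k) ≤ a (N + 2 * k) := by
    intro k
    induction k with
    | zero =>
      have h1 := haN N hN
      simp only [Nat.mul_zero, Nat.add_zero]
      nlinarith
    | succ k ih =>
      have hm : N₀ + 1 ≤ N + 2 * k + 1 := by omega
      have hr := hrec (N + 2 * k + 1) hm
      have e1 : N + 2 * k + 1 - 1 = N + 2 * k := by omega
      have e2 : N + 2 * k + 1 + 1 = N + 2 * (k + 1) := by omega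
      rw [e1, e2] at hr
      have hc2 : max B C < c (N + 2 * (k + 1)) := hc _ (by omega)
      have hcm : max B C < c (N + 2 * k + 1) := hc _ (by omega)
      have hn1 : 0 ≤ n (N + 2 * k + 1) := hn _ (by omega)
      have hn2 : 0 ≤ n (N + 2 * (k + 1)) := hn _ (by omega)
      have hBle : B ≤ c (N + 2 * (k + 1)) :=
        (le_max_left B C).trans hc2.le
      have hCle : C ≤ c (N + 2 * k + 1) :=
        (le_max_right B C).trans hcm.le
      nlinarith
  rw [Metric.tendsto_atTop] at hlim
  obtain ⟨M, hM⟩ := hlim ε hεpos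
  have hdist := hM (N + 2 * M) (by omega)
  rw [Real.dist_eq, sub_zero] at hdist
  have hlt : a (N + 2 * M) < ε := lt_of_abs_lt hdist
  have hnn : 0 ≤ n (N + 2 * M) := hn _ (by omega)
  nlinarith [key M, mul_nonneg hB.le hnn]
end
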